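/- Let S ⊆ X_1 × ⋯ × X_k be a k-way index set, let a ≠ b ∈ {1,…,k}, and fix a choice i assigning to each ℓ ∈ {1,…,k} with ℓ ≠ a,b an element i_ℓ ∈ X_ℓ. Let S^i = { s ∈ S : s_ℓ = i_ℓ for all ℓ ≠ a,b }, and for each s ∈ S let v_s ∈ ℝ^{X_1 ⊔ ⋯ ⊔ X_k} be the column of A_S indexed by s. Then the convex hull of { v_s : s ∈ S^i } is an exposed face of the convex hull of { v_s : s ∈ S }: there is a linear functional φ on ℝ^{X_1 ⊔ ⋯ ⊔ X_k} such that conv{ v_s : s ∈ S^i } equals the set of points of conv{ v_s : s ∈ S } at which φ attains its maximum over conv{ v_s : s ∈ S }. -/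
import Mathlib


/-- The column of the matrix `A_S` indexed by `s ∈ S`: the vector in `ℝ^{X_1 ⊔ ⋯ ⊔ X_k}` with a
`1` in the row indexed by `s ℓ ∈ X ℓ` for each `ℓ`, and `0` elsewhere. -/
def colVec {k : ℕ} {X : Fin k → Type*} [∀ i, DecidableEq (X i)] (s : ∀ i, X i) :
    (Σ ℓ : Fin k, X ℓ) → ℝ :=
  fun lx => if s lx.1 = lx.2 then 1 else 0

open Finset in
lemma face_lemma {E : Type*} [AddCommGroup E] [Module ℝ E]
    (s t : Finset E) (hts : t ⊆ s) (φ : E →ₗ[ℝ] ℝ) (c : ℝ)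
    (heq : ∀ v ∈ s, (φ v = c ↔ v ∈ t))
    (hle : ∀ v ∈ s, φ v ≤ c)
    (hne : t.Nonempty) :
    convexHull ℝ (↑t : Set E) =
      {x ∈ convexHull ℝ (↑s : Set E) | ∀ y ∈ convexHull ℝ (↑s : Set E), φ y ≤ φ x} := by
  obtain ⟨x0, hx0t⟩ := hne
  have hx0 : φ x0 = c := (heq x0 (hts hx0t)).2 hx0t
  have hmax : ∀ y ∈ convexHull ℝ (↑s : Set E), φ y ≤ c := fun y hy =>
    convexHull_min (fun v hv => hle v hv) (convex_halfSpace_le (φ.isLinear) c) hy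
  have hconst : ∀ x ∈ convexHull ℝ (↑t : Set E), φ x = c := fun x hx =>
    convexHull_min (fun v hv => (heq v (hts hv)).2 hv) (convex_hyperplane (φ.isLinear) c) hx
  ext x
  constructor
  · intro hx
    have hxs : x ∈ convexHull ℝ (↑s : Set E) :=
      convexHull_mono (Finset.coe_subset.2 hts) hx
    exact ⟨hxs, fun y hy => by rw [hconst x hx]; exact hmax y hy⟩
  · rintro ⟨hxs, hmaxx⟩
    have hφx : φ x = c := le_antisymm (hmax x hxs)
      (hx0 ▸ hmaxx x0 (subset_convexHull ℝ _ (Finset.mem_coe.2 (hts hx0t))))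
    rw [Finset.convexHull_eq, Set.mem_setOf_eq] at hxs
    obtain ⟨w, hw0, hw1, hwx⟩ := hxs
    rw [Finset.centerMass_eq_of_sum_1 _ _ hw1] at hwx
    have hφsum : ∑ y ∈ s, w y * φ y = c := by
      rw [← hφx, ← hwx, map_sum]
      simp [LinearMap.map_smul, smul_eq_mul]
    have hzero : ∀ y ∈ s, w y * (c - φ y) = 0 := by
      have hsum0 : ∑ y ∈ s, w y * (c - φ y) = 0 := by
        simp only [mul_sub]
        rw [Finset.sum_sub_distrib, ← Finset.sum_mul, hw1, one_mul, hφsum, sub_self]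
      intro y hy
      exact (Finset.sum_eq_zero_iff_of_nonneg (fun y hy =>
        mul_nonneg (hw0 y hy) (sub_nonneg.2 (hle y hy)))).1 hsum0 y hy
    have hmem : ∀ y ∈ s, w y ≠ 0 → y ∈ t := by
      intro y hy hwy
      have := hzero y hy
      rcases mul_eq_zero.1 this with h | h
      · exact absurd h hwy
      · exact (heq y hy).1 (by linarith [sub_eq_zero.1 h])
    have hwt1 : ∑ y ∈ t, w y = 1 := by
      rw [← hw1]
      exact (Finset.sum_subset hts (fun y hy hyt => by
        by_contra h; exact hyt (hmem y hy h))).symm ▸ rfl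
    have hxt : ∑ y ∈ t, w y • y = x := by
      rw [← hwx]
      exact Finset.sum_subset hts (fun y hy hyt => by
        have : w y = 0 := by by_contra h; exact hyt (hmem y hy h)
        simp [this])
    rw [← hxt, ← Finset.centerMass_eq_of_sum_1 _ _ hwt1]
    exact Finset.centerMass_mem_convexHull t (fun y hy => hw0 y (hts hy))
      (by rw [hwt1]; norm_num) (fun y hy => Finset.mem_coe.2 hy)



/-- Let `S` be a `k`-way index set, `a ≠ b` two coordinates, and `i` a choice
of an element `i ℓ ∈ X ℓ` for each `ℓ ≠ a, b`. Let `S^i` be the set of `s ∈ S` with `s ℓ = i ℓ`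
for all `ℓ ≠ a, b`, assumed nonempty. Then the convex hull of the columns `v_s` of `A_S` with
`s ∈ S^i` is an exposed face of the convex hull of all the columns of `A_S`: there is a linear
functional `φ` whose maximum over the latter hull is attained exactly on the former hull. -/

theorem stmt11 {k : ℕ} {X : Fin k → Type*} [∀ i, Fintype (X i)] [∀ i, Nonempty (X i)]
    [∀ i, DecidableEq (X i)]
    (S : Finset (∀ i, X i)) (a b : Fin k) (hab : a ≠ b) (ich : ∀ ℓ, X ℓ)
    (hne : (S.filter fun s => ∀ ℓ, ℓ ≠ a → ℓ ≠ b → s ℓ = ich ℓ).Nonempty) :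
    ∃ φ : ((Σ ℓ : Fin k, X ℓ) → ℝ) →ₗ[ℝ] ℝ,
      convexHull ℝ
          (colVec '' ↑(S.filter fun s => ∀ ℓ, ℓ ≠ a → ℓ ≠ b → s ℓ = ich ℓ)) =
        {x ∈ convexHull ℝ (colVec '' (S : Set (∀ i, X i))) |
          ∀ y ∈ convexHull ℝ (colVec '' (S : Set (∀ i, X i))), φ y ≤ φ x} := by
  classical
  set D : Finset (Fin k) := Finset.univ.filter (fun ℓ => ℓ ≠ a ∧ ℓ ≠ b) with hD
  set φ : ((Σ ℓ : Fin k, X ℓ) → ℝ) →ₗ[ℝ] ℝ :=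
    ∑ ℓ ∈ D, LinearMap.proj (R := ℝ) (⟨ℓ, ich ℓ⟩ : Σ ℓ : Fin k, X ℓ) with hφ
  refine ⟨φ, ?_⟩
  have hval : ∀ s : ∀ i, X i, φ (colVec s) =
      ∑ ℓ ∈ D, (if s ℓ = ich ℓ then (1:ℝ) else 0) := by
    intro s
    simp [hφ, LinearMap.sum_apply, colVec]
  have hcard : ∀ s : ∀ i, X i, φ (colVec s) ≤ (D.card : ℝ) := by
    intro s
    rw [hval]
    calc ∑ ℓ ∈ D, (if s ℓ = ich ℓ then (1:ℝ) else 0) ≤ ∑ ℓ ∈ D, (1:ℝ) :=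
      Finset.sum_le_sum (fun ℓ _ => by split <;> norm_num)
    _ = D.card := by simp
  have hiff : ∀ s : ∀ i, X i,
      (φ (colVec s) = (D.card : ℝ)) ↔ (∀ ℓ, ℓ ≠ a → ℓ ≠ b → s ℓ = ich ℓ) := by
    intro s
    rw [hval]
    have h1 : (D.card : ℝ) = ∑ ℓ ∈ D, (1:ℝ) := by simp
    rw [h1]
    rw [Finset.sum_eq_sum_iff_of_le (fun ℓ _ => by split <;> norm_num)]
    constructor
    · intro h ℓ ha' hb'
      have hℓD : ℓ ∈ D := by simp [hD, ha', hb']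
      have := h ℓ hℓD
      by_contra hc
      simp [hc] at this
    · intro h ℓ hℓ
      have : s ℓ = ich ℓ := by
        simp only [hD, Finset.mem_filter] at hℓ
        exact h ℓ hℓ.2.1 hℓ.2.2
      simp [this]
  set F := (S.filter fun s => ∀ ℓ, ℓ ≠ a → ℓ ≠ b → s ℓ = ich ℓ) with hF
  have key := face_lemma (S.image colVec) (F.image colVec)
    (Finset.image_subset_image (Finset.filter_subset _ _)) φ (D.card : ℝ)
    (by
      intro v hv
      obtain ⟨s, hs, rfl⟩ := Finset.mem_image.1 hv
      constructor
      · intro h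
        exact Finset.mem_image.2 ⟨s, Finset.mem_filter.2 ⟨hs, (hiff s).1 h⟩, rfl⟩
      · intro h
        obtain ⟨s', hs', hcv⟩ := Finset.mem_image.1 h
        rw [← hcv]
        exact (hiff s').2 (Finset.mem_filter.1 hs').2)
    (by
      intro v hv
      obtain ⟨s, hs, rfl⟩ := Finset.mem_image.1 hv
      exact hcard s)
    (hne.image colVec)
  rw [Finset.coe_image, Finset.coe_image] at key
  exact key
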